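/- Let V be a finite-dimensional real inner product space, C ⊆ V a proper cone and F a Finsler function on C. Then the polar Finsler function F^o is positively homogeneous on C^o, i.e. F^o (s • p) = s * F^o p for all s > 0 and p ∈ C^o, and concave on C^o, i.e. t * F^o p + (1 - t) * F^o q ≤ F^o (t • p + (1 - t) • q) for all p, q ∈ C^o and t ∈ [0, 1]. If moreover F is upper semicontinuous on C, then 0 < F^o p for every p ∈ V such that ⟪p, y⟫ < 0 for all y ∈ C. -/

import Mathlib

/-!
The set `polarWSet C F p` transforms under `p ↦ s • p` by scaling and under convex combinations of
`p, q` contains the matching convex combinations of its elements; taking suprema gives homogeneity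
and concavity of `F^o`. For positivity, homogeneity of `F` reduces the defining inequality to the
compact set `C ∩ S(0, 1)`, where `⟪p, ·⟫` attains a negative maximum and the upper semicontinuous
`F` is bounded above, so a small `ε > 0` lies in `polarWSet C F p`.
-/

open Pointwise

/-- The polar cone of `C`. -/
def polarConeSet {V : Type*} [NormedAddCommGroup V] [InnerProductSpace ℝ V]
    (C : Set V) : Set V :=
  {p : V | p ≠ 0 ∧ ∀ y ∈ C, (inner ℝ p y : ℝ) ≤ 0}

/-- The set whose supremum defines the polar Finsler function `F^o p`. -/
def polarWSet {V : Type*} [NormedAddCommGroup V] [InnerProductSpace ℝ V]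
    (C : Set V) (F : V → ℝ) (p : V) : Set ℝ :=
  {w : ℝ | 0 ≤ w ∧ ∀ y ∈ C, (inner ℝ p y : ℝ) + w * F y ≤ 0}

/-- The polar Finsler function `F^o`. -/
noncomputable def polarFinsler {V : Type*} [NormedAddCommGroup V] [InnerProductSpace ℝ V]
    (C : Set V) (F : V → ℝ) (p : V) : ℝ :=
  sSup (polarWSet C F p)

theorem exists_pos_forall_add_mul_le_zero {α : Type*} [TopologicalSpace α] {K : Set α}
    {f g : α → ℝ} (hK : IsCompact K) (hg : UpperSemicontinuousOn g K)
    (hf : UpperSemicontinuousOn f K) (hneg : ∀ x ∈ K, g x < 0) :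
    ∃ ε > 0, ∀ x ∈ K, g x + ε * f x ≤ 0 := by
  rcases K.eq_empty_or_nonempty with rfl | hKne
  · exact ⟨1, one_pos, by simp⟩
  obtain ⟨x₀, hx₀K, hx₀max⟩ := hg.exists_isMaxOn hKne hK
  obtain ⟨M, hM⟩ := hf.bddAbove_of_isCompact hK
  have hM₁ : 0 < max M 1 := lt_max_of_lt_right one_pos
  refine ⟨-g x₀ / max M 1, div_pos (neg_pos.2 (hneg x₀ hx₀K)) hM₁, fun x hx => ?_⟩
  have hfx : f x ≤ max M 1 := (hM ⟨x, hx, rfl⟩).trans (le_max_left M 1)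
  calc g x + -g x₀ / max M 1 * f x
      ≤ g x₀ + -g x₀ / max M 1 * max M 1 := by
        gcongr
        exacts [hx₀max hx, div_nonneg (neg_nonneg.2 (hneg x₀ hx₀K).le) hM₁.le]
    _ = 0 := by rw [div_mul_cancel₀ _ hM₁.ne']; ring

theorem isCompact_inter_sphere_of_isClosed_union_zero {V : Type*} [NormedAddCommGroup V]
    [ProperSpace V] {C : Set V} (hclosed : IsClosed (C ∪ {0})) {r : ℝ} (hr : r ≠ 0) :
    IsCompact (C ∩ Metric.sphere 0 r) := by
  have hunion : C ∩ Metric.sphere 0 r = (C ∪ {0}) ∩ Metric.sphere 0 r := by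
    rw [Set.union_inter_distrib_right, Set.singleton_inter_eq_empty.2 (by simpa using hr.symm),
      Set.union_empty]
  rw [hunion]
  exact (isCompact_sphere 0 r).inter_left hclosed

section polarWSet

variable {V : Type*} [NormedAddCommGroup V] [InnerProductSpace ℝ V] {C : Set V} {F : V → ℝ}

theorem bddAbove_polarWSet {y : V} (hy : y ∈ C) (hFy : 0 < F y) (p : V) :
    BddAbove (polarWSet C F p) :=
  ⟨-(inner ℝ p y : ℝ) / F y, fun w hw => by
    rw [le_div_iff₀ hFy]
    linarith [hw.2 y hy]⟩

theorem zero_mem_polarWSet {p : V} (hp : p ∈ polarConeSet C) : (0 : ℝ) ∈ polarWSet C F p :=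
  ⟨le_rfl, fun y hy => by simpa using hp.2 y hy⟩

theorem polarWSet_smul {s : ℝ} (hs : 0 < s) (p : V) :
    polarWSet C F (s • p) = s • polarWSet C F p := by
  ext w
  simp only [polarWSet, Set.mem_smul_set, Set.mem_ofPred_eq, smul_eq_mul, real_inner_smul_left]
  constructor
  · rintro ⟨hw0, hw⟩
    refine ⟨s⁻¹ * w, ⟨by positivity, fun y hy => ?_⟩, by field_simp⟩
    have key : inner ℝ p y + s⁻¹ * w * F y = s⁻¹ * (s * inner ℝ p y + w * F y) := by
      field_simp
    rw [key]
    exact mul_nonpos_of_nonneg_of_nonpos (inv_nonneg.2 hs.le) (hw y hy)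
  · rintro ⟨v, ⟨hv0, hv⟩, rfl⟩
    refine ⟨by positivity, fun y hy => ?_⟩
    have key : s * inner ℝ p y + s * v * F y = s * (inner ℝ p y + v * F y) := by ring
    rw [key]
    exact mul_nonpos_of_nonneg_of_nonpos hs.le (hv y hy)

theorem polarFinsler_smul {s : ℝ} (hs : 0 < s) (p : V) :
    polarFinsler C F (s • p) = s * polarFinsler C F p := by
  rw [polarFinsler, polarWSet_smul hs, Real.sSup_smul_of_nonneg hs.le, smul_eq_mul, polarFinsler]

theorem smul_polarWSet_add_smul_polarWSet_subset {t : ℝ} (ht : t ∈ Set.Icc (0 : ℝ) 1) (p q : V) :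
    t • polarWSet C F p + (1 - t) • polarWSet C F q ⊆ polarWSet C F (t • p + (1 - t) • q) := by
  rintro _ ⟨_, ⟨a, ⟨ha0, ha⟩, rfl⟩, _, ⟨b, ⟨hb0, hb⟩, rfl⟩, rfl⟩
  have ht' : 0 ≤ 1 - t := sub_nonneg.2 ht.2
  refine ⟨add_nonneg (mul_nonneg ht.1 ha0) (mul_nonneg ht' hb0), fun y hy => ?_⟩
  have key : inner ℝ (t • p + (1 - t) • q) y + (t • a + (1 - t) • b) * F y
      = t * (inner ℝ p y + a * F y) + (1 - t) * (inner ℝ q y + b * F y) := by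
    simp only [inner_add_left, real_inner_smul_left, smul_eq_mul]
    ring
  rw [key]
  exact add_nonpos (mul_nonpos_of_nonneg_of_nonpos ht.1 (ha y hy))
    (mul_nonpos_of_nonneg_of_nonpos ht' (hb y hy))

theorem polarFinsler_concave (hFpos : ∃ y ∈ C, 0 < F y) {p q : V} (hp : p ∈ polarConeSet C)
    (hq : q ∈ polarConeSet C) {t : ℝ} (ht : t ∈ Set.Icc (0 : ℝ) 1) :
    t * polarFinsler C F p + (1 - t) * polarFinsler C F q ≤
      polarFinsler C F (t • p + (1 - t) • q) := by
  obtain ⟨y, hy, hFy⟩ := hFpos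
  have hne : ∀ {r : ℝ} {p' : V}, p' ∈ polarConeSet C → (r • polarWSet C F p').Nonempty :=
    fun hp' => (Set.nonempty_of_mem (zero_mem_polarWSet hp')).smul_set
  have hbdd : ∀ {r : ℝ} (p' : V), 0 ≤ r → BddAbove (r • polarWSet C F p') :=
    fun p' hr => (bddAbove_polarWSet hy hFy p').smul_of_nonneg hr
  have ht' : 0 ≤ 1 - t := sub_nonneg.2 ht.2
  calc t * polarFinsler C F p + (1 - t) * polarFinsler C F q
      = sSup (t • polarWSet C F p + (1 - t) • polarWSet C F q) := by
        rw [csSup_add (hne hp) (hbdd p ht.1) (hne hq) (hbdd q ht'),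
          Real.sSup_smul_of_nonneg ht.1, Real.sSup_smul_of_nonneg ht', polarFinsler, polarFinsler,
          smul_eq_mul, smul_eq_mul]
    _ ≤ polarFinsler C F (t • p + (1 - t) • q) :=
        csSup_le_csSup (bddAbove_polarWSet hy hFy _) ((hne hp).add (hne hq))
          (smul_polarWSet_add_smul_polarWSet_subset ht p q)

theorem mem_polarWSet_of_forall_mem_sphere (h0 : (0 : V) ∉ C)
    (hcone : ∀ (s : ℝ) (y : V), 0 < s → y ∈ C → s • y ∈ C)
    (hFhom : ∀ (s : ℝ) (y : V), 0 < s → y ∈ C → F (s • y) = s * F y) {p : V} {ε : ℝ}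
    (hε : 0 ≤ ε) (h : ∀ u ∈ C ∩ Metric.sphere 0 1, (inner ℝ p u : ℝ) + ε * F u ≤ 0) :
    ε ∈ polarWSet C F p := by
  refine ⟨hε, fun y hy => ?_⟩
  have hn : 0 < ‖y‖ := norm_pos_iff.2 fun hy0 => h0 (hy0 ▸ hy)
  set u := ‖y‖⁻¹ • y
  have huC : u ∈ C := hcone _ _ (inv_pos.2 hn) hy
  have hu : u ∈ C ∩ Metric.sphere 0 1 := ⟨huC, by simp [u, norm_smul, hn.ne']⟩
  have hyu : y = ‖y‖ • u := (smul_inv_smul₀ hn.ne' y).symm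
  calc inner ℝ p y + ε * F y = ‖y‖ * (inner ℝ p u + ε * F u) := by
        rw [hyu, real_inner_smul_right, hFhom _ _ hn huC, ← hyu]
        ring
    _ ≤ 0 := mul_nonpos_of_nonneg_of_nonpos hn.le (h u hu)

theorem polarFinsler_pos [ProperSpace V] (h0 : (0 : V) ∉ C)
    (hcone : ∀ (s : ℝ) (y : V), 0 < s → y ∈ C → s • y ∈ C) (hclosed : IsClosed (C ∪ {0}))
    (hFhom : ∀ (s : ℝ) (y : V), 0 < s → y ∈ C → F (s • y) = s * F y)
    (hFpos : ∃ y ∈ C, 0 < F y) (husc : UpperSemicontinuousOn F C) {p : V}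
    (hp : ∀ y ∈ C, (inner ℝ p y : ℝ) < 0) : 0 < polarFinsler C F p := by
  obtain ⟨y, hy, hFy⟩ := hFpos
  have hK := isCompact_inter_sphere_of_isClosed_union_zero hclosed (one_ne_zero (α := ℝ))
  obtain ⟨ε, hε, hεK⟩ := exists_pos_forall_add_mul_le_zero hK
    ((continuous_const.inner continuous_id).upperSemicontinuous.upperSemicontinuousOn _ :
      UpperSemicontinuousOn (fun u => (inner ℝ p u : ℝ)) _)
    (husc.mono Set.inter_subset_left) fun u hu => hp u hu.1
  exact hε.trans_le <| le_csSup (bddAbove_polarWSet hy hFy p)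
    (mem_polarWSet_of_forall_mem_sphere h0 hcone hFhom hε.le hεK)

end polarWSet

theorem polarFinsler_homogeneous_concave_positive_general
    {V : Type*} [NormedAddCommGroup V] [InnerProductSpace ℝ V] [FiniteDimensional ℝ V]
    (C : Set V) (h0 : (0:V) ∉ C)
    (hcone : ∀ (s : ℝ) (y : V), 0 < s → y ∈ C → s • y ∈ C)
    (hclosed : IsClosed (C ∪ {0}))
    (F : V → ℝ)
    (hFhom : ∀ (s : ℝ) (y : V), 0 < s → y ∈ C → F (s • y) = s * F y)
    (hFpos : ∃ y₁ ∈ C, 0 < F y₁) :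
    (∀ (s : ℝ) (p : V), 0 < s → p ∈ polarConeSet C →
      polarFinsler C F (s • p) = s * polarFinsler C F p) ∧
    (∀ p ∈ polarConeSet C, ∀ q ∈ polarConeSet C, ∀ t : ℝ, t ∈ Set.Icc (0:ℝ) 1 →
      t * polarFinsler C F p + (1 - t) * polarFinsler C F q ≤
        polarFinsler C F (t • p + (1 - t) • q)) ∧
    (UpperSemicontinuousOn F C →
      ∀ p : V, (∀ y ∈ C, (inner ℝ p y : ℝ) < 0) → 0 < polarFinsler C F p) :=
  ⟨fun _ p hs _ => polarFinsler_smul hs p,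
    fun _ hp _ hq _ ht => polarFinsler_concave hFpos hp hq ht,
    fun husc _ hp => polarFinsler_pos h0 hcone hclosed hFhom hFpos husc hp⟩

/-- The polar Finsler function `F^o` is positively homogeneous and concave on the polar
cone, and (for upper semicontinuous `F`) positive at every `p` with `⟪p, y⟫ < 0` on
all of `C`. -/
theorem polarFinsler_homogeneous_concave_positive
    {V : Type*} [NormedAddCommGroup V] [InnerProductSpace ℝ V] [FiniteDimensional ℝ V]
    (C : Set V) (hne : C.Nonempty) (hconv : Convex ℝ C) (h0 : (0:V) ∉ C)
    (hcone : ∀ (s : ℝ) (y : V), 0 < s → y ∈ C → s • y ∈ C)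
    (hclosed : IsClosed (C ∪ {0}))
    (hint : (interior (C ∪ {0})).Nonempty)
    (F : V → ℝ)
    (hFnn : ∀ y ∈ C, 0 ≤ F y)
    (hFhom : ∀ (s : ℝ) (y : V), 0 < s → y ∈ C → F (s • y) = s * F y)
    (hFconc : ∀ y ∈ C, ∀ w ∈ C, ∀ t : ℝ, t ∈ Set.Icc (0:ℝ) 1 →
      t * F y + (1 - t) * F w ≤ F (t • y + (1 - t) • w))
    (hFpos : ∃ y₁ ∈ C, 0 < F y₁) :
    (∀ (s : ℝ) (p : V), 0 < s → p ∈ polarConeSet C →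
      polarFinsler C F (s • p) = s * polarFinsler C F p) ∧
    (∀ p ∈ polarConeSet C, ∀ q ∈ polarConeSet C, ∀ t : ℝ, t ∈ Set.Icc (0:ℝ) 1 →
      t * polarFinsler C F p + (1 - t) * polarFinsler C F q ≤
        polarFinsler C F (t • p + (1 - t) • q)) ∧
    (UpperSemicontinuousOn F C →
      ∀ p : V, (∀ y ∈ C, (inner ℝ p y : ℝ) < 0) → 0 < polarFinsler C F p) :=
  polarFinsler_homogeneous_concave_positive_general C h0 hcone hclosed F hFhom hFpos
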